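/- For any real α, β, the linear map D_9 on the 10-dimensional quotient q(α,β) defined by D_9(e_i) = e_{i+1} for 2 ≤ i ≤ 9, D_9(e_1) = 0, D_9(e_10) = 0 (i.e. D_9 = E_{3,2}+E_{4,3}+E_{5,4}+E_{6,5}+E_{7,6}+E_{8,7}+E_{9,8}+E_{10,9}) is a derivation of q(α,β), and it is nilpotent. -/
import Mathlib


noncomputable section

/-- The basis vector `e k` (1-based) of `ℝ^n`; equals `0` if `k > n`. -/
def ee (n k : ℕ) : Fin n → ℝ := fun m => if (m : ℕ) + 1 = k then 1 else 0

/-- Structure constants of the Lie algebra `g(α,β)` of Burde–van Velthoven for `i < j`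
(1-based indices): `cc n α β i j` is the bracket `[e_i, e_j]`. All brackets not listed
here (and not determined by skew-symmetry and bilinearity) are zero. Taking `n = 11`
gives `g(α,β)`; taking `n = 10` gives the quotient `g(α,β)/ℝe₁₁` (all `e₁₁`-components
vanish automatically since `ee 10 11 = 0`). -/
def cc (n : ℕ) (α β : ℝ) : ℕ → ℕ → Fin n → ℝ
  | 1, j => if 2 ≤ j ∧ j ≤ 10 then ee n (j + 1) else 0
  | 2, 3 => ee n 5 + α • ee n 6
  | 2, 4 => ee n 6 + α • ee n 7
  | 2, 5 => -ee n 7 + (α - β) • ee n 8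
  | 2, 6 => (-3 : ℝ) • ee n 8 + (α - 2 * β) • ee n 9
  | 2, 7 => (-2 : ℝ) • ee n 9 - ((5 * α + 7 * β) / 4) • ee n 10
              + ((27 * α ^ 2 + 12 * α * β + β ^ 2) / 16) • ee n 11
  | 2, 8 => (2 : ℝ) • ee n 10 - ((23 * α + β) / 4) • ee n 11
  | 2, 9 => -ee n 11
  | 3, 4 => (2 : ℝ) • ee n 7 + β • ee n 8
  | 3, 5 => (2 : ℝ) • ee n 8 + β • ee n 9
  | 3, 6 => -ee n 9 + ((9 * α - β) / 4) • ee n 10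
              - ((27 * α ^ 2 + 12 * α * β + β ^ 2) / 16) • ee n 11
  | 3, 7 => (-4 : ℝ) • ee n 10 + (3 * (3 * α - β) / 2) • ee n 11
  | 3, 8 => (3 : ℝ) • ee n 11
  | 4, 5 => (3 : ℝ) • ee n 9 - ((9 * α - 5 * β) / 4) • ee n 10
              + ((27 * α ^ 2 + 12 * α * β + β ^ 2) / 16) • ee n 11
  | 4, 6 => (3 : ℝ) • ee n 10 - ((9 * α - 5 * β) / 4) • ee n 11
  | 4, 7 => (-7 : ℝ) • ee n 11
  | 5, 6 => (10 : ℝ) • ee n 11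
  | _, _ => 0

/-- Full (skew-symmetrized) structure constants: `sc n α β i j = [e_{i+1}, e_{j+1}]`
for `i j : Fin n` (0-based). -/
def sc (n : ℕ) (α β : ℝ) (i j : Fin n) : Fin n → ℝ :=
  cc n α β ((i : ℕ) + 1) ((j : ℕ) + 1) - cc n α β ((j : ℕ) + 1) ((i : ℕ) + 1)

/-- The bilinear bracket on `ℝ^n` determined by the structure constants of `g(α,β)`. -/
def br (n : ℕ) (α β : ℝ) (x y : Fin n → ℝ) : Fin n → ℝ :=
  ∑ i : Fin n, ∑ j : Fin n, (x i * y j) • sc n α β i j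

set_option maxHeartbeats 4000000 in
theorem sum_univ_ten {M : Type*} [AddCommMonoid M] (f : Fin 10 → M) :
    ∑ i, f i = f 0 + f 1 + f 2 + f 3 + f 4 + f 5 + f 6 + f 7 + f 8 + f 9 := by
  rw [Fin.sum_univ_castSucc, Fin.sum_univ_castSucc, Fin.sum_univ_eight]; rfl

def Dfun (x : Fin 10 → ℝ) (m : Fin 10) : ℝ :=
  if 2 ≤ (m : ℕ) ∧ (m : ℕ) ≤ 9 then x (m - 1) else 0

def Dmap : (Fin 10 → ℝ) →ₗ[ℝ] (Fin 10 → ℝ) where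
  toFun := Dfun
  map_add' x y := by
    funext m; simp only [Dfun, Pi.add_apply]; split <;> simp
  map_smul' c x := by
    funext m
    simp only [Dfun, Pi.smul_apply, RingHom.id_apply, smul_eq_mul]
    split <;> simp

set_option maxHeartbeats 12000000 in
theorem Dmap_der (α β : ℝ) (x y : Fin 10 → ℝ) :
    Dmap (br 10 α β x y) = br 10 α β (Dmap x) y + br 10 α β x (Dmap y) := by
  funext m
  fin_cases m <;>
  · simp (config := { decide := true }) [Dmap, Dfun, br, sc, cc, ee, sum_univ_ten, show ((2:Fin 10) - 1) = 1 from rfl, show ((3:Fin 10) - 1) = 2 from rfl, show ((4:Fin 10) - 1) = 3 from rfl, show ((5:Fin 10) - 1) = 4 from rfl, show ((6:Fin 10) - 1) = 5 from rfl, show ((7:Fin 10) - 1) = 6 from rfl, show ((8:Fin 10) - 1) = 7 from rfl, show ((9:Fin 10) - 1) = 8 from rfl, show ((⟨2, by omega⟩:Fin 10) - 1) = 1 from rfl, show ((⟨3, by omega⟩:Fin 10) - 1) = 2 from rfl, show ((⟨4, by omega⟩:Fin 10) - 1) = 3 from rfl, show ((⟨5, by omega⟩:Fin 10) - 1) = 4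 from rfl, show ((⟨6, by omega⟩:Fin 10) - 1) = 5 from rfl, show ((⟨7, by omega⟩:Fin 10) - 1) = 6 from rfl, show ((⟨8, by omega⟩:Fin 10) - 1) = 7 from rfl, show ((⟨9, by omega⟩:Fin 10) - 1) = 8 from rfl]
    try ring

set_option maxHeartbeats 4000000 in
/-- For any real `α, β`, the linear map `D₉` on the 10-dimensional quotient
`q(α,β) = g(α,β)/ℝe₁₁` determined by `D₉(e_i) = e_{i+1}` for `2 ≤ i ≤ 9` and
`D₉(e₁) = D₉(e₁₀) = 0` (i.e. `D₉ = E₃₂ + E₄₃ + E₅₄ + E₆₅ + E₇₆ + E₈₇ + E₉₈ + E₁₀,₉`)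
is a nilpotent derivation of `q(α,β)`. -/
theorem D9_is_nilpotent_derivation (α β : ℝ) :
    ∃ D : (Fin 10 → ℝ) →ₗ[ℝ] (Fin 10 → ℝ),
      (D (ee 10 1) = 0 ∧ D (ee 10 10) = 0 ∧
        ∀ i : ℕ, 2 ≤ i → i ≤ 9 → D (ee 10 i) = ee 10 (i + 1)) ∧
      (∀ x y : Fin 10 → ℝ, D (br 10 α β x y) = br 10 α β (D x) y + br 10 α β x (D y)) ∧
      IsNilpotent D := by
  refine ⟨Dmap, ⟨?_, ?_, ?_⟩, Dmap_der α β, 9, ?_⟩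
  · funext m
    fin_cases m <;> simp (config := { decide := true }) [Dmap, Dfun, ee, show ((2:Fin 10) - 1) = 1 from rfl, show ((3:Fin 10) - 1) = 2 from rfl, show ((4:Fin 10) - 1) = 3 from rfl, show ((5:Fin 10) - 1) = 4 from rfl, show ((6:Fin 10) - 1) = 5 from rfl, show ((7:Fin 10) - 1) = 6 from rfl, show ((8:Fin 10) - 1) = 7 from rfl, show ((9:Fin 10) - 1) = 8 from rfl, show ((⟨2, by omega⟩:Fin 10) - 1) = 1 from rfl, show ((⟨3, by omega⟩:Fin 10) - 1) = 2 from rfl, show ((⟨4, by omega⟩:Fin 10) - 1) = 3 from rfl, show ((⟨5, by omega⟩:Fin 10) - 1) = 4 from rfl, show ((⟨6, by omega⟩:Fin 10) - 1) = 5 from rfl, show ((⟨7, by omega⟩:Fin 10) - 1) = 6 from rfl, show ((⟨8, by omega⟩:Fin 10) - 1) = 7 from rfl, show ((⟨9, by omega⟩:Fin 10) - 1) = 8 from rfl]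
  · funext m
    fin_cases m <;> simp (config := { decide := true }) [Dmap, Dfun, ee, show ((2:Fin 10) - 1) = 1 from rfl, show ((3:Fin 10) - 1) = 2 from rfl, show ((4:Fin 10) - 1) = 3 from rfl, show ((5:Fin 10) - 1) = 4 from rfl, show ((6:Fin 10) - 1) = 5 from rfl, show ((7:Fin 10) - 1) = 6 from rfl, show ((8:Fin 10) - 1) = 7 from rfl, show ((9:Fin 10) - 1) = 8 from rfl, show ((⟨2, by omega⟩:Fin 10) - 1) = 1 from rfl, show ((⟨3, by omega⟩:Fin 10) - 1) = 2 from rfl, show ((⟨4, by omega⟩:Fin 10) - 1) = 3 from rfl, show ((⟨5, by omega⟩:Fin 10) - 1) = 4 from rfl, show ((⟨6, by omega⟩:Fin 10) - 1) = 5 from rfl, show ((⟨7, by omega⟩:Fin 10) - 1) = 6 from rfl, show ((⟨8, by omega⟩:Fin 10) - 1) = 7 from rfl, show ((⟨9, by omega⟩:Fin 10) - 1) = 8 from rfl]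
  · intro i h2 h9
    interval_cases i <;>
    · funext m
      fin_cases m <;> simp (config := { decide := true }) [Dmap, Dfun, ee, show ((2:Fin 10) - 1) = 1 from rfl, show ((3:Fin 10) - 1) = 2 from rfl, show ((4:Fin 10) - 1) = 3 from rfl, show ((5:Fin 10) - 1) = 4 from rfl, show ((6:Fin 10) - 1) = 5 from rfl, show ((7:Fin 10) - 1) = 6 from rfl, show ((8:Fin 10) - 1) = 7 from rfl, show ((9:Fin 10) - 1) = 8 from rfl, show ((⟨2, by omega⟩:Fin 10) - 1) = 1 from rfl, show ((⟨3, by omega⟩:Fin 10) - 1) = 2 from rfl, show ((⟨4, by omega⟩:Fin 10) - 1) = 3 from rfl, show ((⟨5, by omega⟩:Fin 10) - 1) = 4 from rfl, show ((⟨6, by omega⟩:Fin 10) - 1) = 5 from rfl, show ((⟨7, by omega⟩:Fin 10) - 1) = 6 from rfl, show ((⟨8, by omega⟩:Fin 10) - 1) = 7 from rfl, show ((⟨9, by omega⟩:Fin 10) - 1) = 8 from rfl]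
  · ext x m
    fin_cases m <;>
      simp (config := { decide := true }) [Dmap, Dfun, pow_succ, Module.End.mul_apply, Module.End.one_apply, show ((2:Fin 10) - 1) = 1 from rfl, show ((3:Fin 10) - 1) = 2 from rfl, show ((4:Fin 10) - 1) = 3 from rfl, show ((5:Fin 10) - 1) = 4 from rfl, show ((6:Fin 10) - 1) = 5 from rfl, show ((7:Fin 10) - 1) = 6 from rfl, show ((8:Fin 10) - 1) = 7 from rfl, show ((9:Fin 10) - 1) = 8 from rfl, show ((⟨2, by omega⟩:Fin 10) - 1) = 1 from rfl, show ((⟨3, by omega⟩:Fin 10) - 1) = 2 from rfl, show ((⟨4, by omega⟩:Fin 10) - 1) = 3 from rfl, show ((⟨5, by omega⟩:Fin 10) - 1) = 4 from rfl, show ((⟨6, by omega⟩:Fin 10) - 1) = 5 from rfl, show ((⟨7, by omega⟩:Fin 10) - 1) = 6 from rfl, show ((⟨8, by omega⟩:Fin 10) - 1) = 7 from rfl, show ((⟨9, by omega⟩:Fin 10) - 1) = 8 from rfl]
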